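/- Let $n \geq 3$, $\alpha, \beta \in \mathbb{R}$, and let $V : (0,1] \to [0,\infty)$ be $C^1$ with $\alpha\left(r V'(r) + (n - 2\beta - \alpha - 2)V(r)\right) \geq 0$ for all $r \in (0,1]$ and $\lim_{r \to 0^+} r^{n-2} V(r) = 0$. Then for every $C^1$ function $\eta : [0,1] \to \mathbb{R}$ with compact support in $[0,1)$, $\int_0^1 r^{n-3} V(r)\left(\left(r\eta'(r) + \beta\eta(r)\right)^2 - \frac{\alpha^2}{4}\eta(r)^2\right) dr \geq 0$. -/

import Mathlib

open Set Filter MeasureTheory Topology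

/-!
With `F(r) = r^(n-2) V(r) η(r)^2`, the integrand plus `(α/2) F'` is the sum
`r^(n-3) V (r η' + (β + α/2) η)^2 + (α/2) r^(n-3) η^2 (r V' + (n - 2β - α - 2) V)`
of two nonnegative terms; this pointwise completed square replaces the paper's discriminant
argument. Integrating over `[ε, 1]`, where `F(1) = 0`, bounds `∫_ε^1` from below by
`(α/2) F(ε)`, which tends to `0` as `ε → 0⁺`.
-/

theorem integral_Ioo_nonneg_of_tendsto_of_le_integral {f b : ℝ → ℝ} {a c : ℝ} (hac : a < c)
    (hb : Tendsto b (𝓝[>] a) (𝓝 0)) (hle : ∀ ε ∈ Ioo a c, b ε ≤ ∫ x in ε..c, f x) :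
    0 ≤ ∫ x in Ioo a c, f x := by
  by_cases hf : IntegrableOn f (Ioo a c)
  swap
  · rw [integral_undef hf]
  have hfi : IntegrableOn f (uIcc a c) := by
    rwa [uIcc_of_le hac.le, integrableOn_Icc_iff_integrableOn_Ioo]
  have hlim : Tendsto (fun ε => ∫ x in ε..c, f x) (𝓝[>] a) (𝓝 (∫ x in a..c, f x)) := by
    rw [← nhdsWithin_Ioo_eq_nhdsGT hac]
    exact ((intervalIntegral.continuousOn_primitive_interval_left hfi a left_mem_uIcc).mono
      (uIcc_of_le hac.le ▸ Ioo_subset_Icc_self)).tendsto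
  rw [← integral_Ioc_eq_integral_Ioo, ← intervalIntegral.integral_of_le hac.le]
  exact le_of_tendsto_of_tendsto hb hlim (eventually_of_mem (Ioo_mem_nhdsGT hac) hle)

theorem hardy_integrand_add_mul_deriv_nonneg (k : ℕ) {α β r v v' e e' : ℝ} (hr : 0 ≤ r)
    (hv : 0 ≤ v) (hcond : 0 ≤ α * (r * v' + ((k : ℝ) + 1 - 2 * β - α) * v)) :
    0 ≤ r ^ k * v * ((r * e' + β * e) ^ 2 - α ^ 2 / 4 * e ^ 2) +
      α / 2 * (((k : ℝ) + 1) * r ^ k * v * e ^ 2 +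
        r ^ (k + 1) * (v' * e ^ 2 + v * (2 * e * e'))) := by
  have hsq : r ^ k * v * ((r * e' + β * e) ^ 2 - α ^ 2 / 4 * e ^ 2) +
      α / 2 * (((k : ℝ) + 1) * r ^ k * v * e ^ 2 +
        r ^ (k + 1) * (v' * e ^ 2 + v * (2 * e * e'))) =
      r ^ k * v * (r * e' + (β + α / 2) * e) ^ 2 +
        α * (r * v' + ((k : ℝ) + 1 - 2 * β - α) * v) * (r ^ k * e ^ 2) / 2 := by
    ring
  rw [hsq]
  have hrk := pow_nonneg hr k
  positivity

section

variable {k : ℕ} {α β ε : ℝ} {V V' η : ℝ → ℝ}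

theorem hasDerivAt_pow_mul_mul_sq {r : ℝ} (hV : HasDerivAt V (V' r) r)
    (hη : HasDerivAt η (deriv η r) r) :
    HasDerivAt (fun x => x ^ (k + 1) * V x * η x ^ 2)
      (((k : ℝ) + 1) * r ^ k * V r * η r ^ 2 +
        r ^ (k + 1) * (V' r * η r ^ 2 + V r * (2 * η r * deriv η r))) r := by
  refine (((hasDerivAt_pow (k + 1) r).fun_mul hV).fun_mul (hη.fun_pow 2)).congr_deriv ?_
  simp only [Nat.add_sub_cancel, Nat.cast_add, Nat.cast_one, Nat.cast_ofNat]
  ring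

theorem hardy_boundary_term_le_integral (hε₀ : 0 ≤ ε) (hε₁ : ε ≤ 1)
    (hV : ∀ r ∈ Icc ε 1, 0 ≤ V r) (hVd : ∀ r ∈ Icc ε 1, HasDerivAt V (V' r) r)
    (hV' : ContinuousOn V' (Icc ε 1))
    (hcond : ∀ r ∈ Icc ε 1, 0 ≤ α * (r * V' r + ((k : ℝ) + 1 - 2 * β - α) * V r))
    (hη : ContDiff ℝ 1 η) (hη₁ : η 1 = 0) :
    α / 2 * (ε ^ (k + 1) * V ε * η ε ^ 2) ≤
      ∫ r in ε..1, r ^ k * V r * ((r * deriv η r + β * η r) ^ 2 - α ^ 2 / 4 * η r ^ 2) := by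
  have hηd : ∀ r, HasDerivAt η (deriv η r) r := fun r =>
    (hη.differentiable one_ne_zero r).hasDerivAt
  have hηc := hη.continuous
  have hη'c := hη.continuous_deriv le_rfl
  have hVc : ContinuousOn V (Icc ε 1) := fun r hr => (hVd r hr).continuousAt.continuousWithinAt
  set f := fun r => r ^ k * V r * ((r * deriv η r + β * η r) ^ 2 - α ^ 2 / 4 * η r ^ 2)
  set φ := fun r => ((k : ℝ) + 1) * r ^ k * V r * η r ^ 2 +
        r ^ (k + 1) * (V' r * η r ^ 2 + V r * (2 * η r * deriv η r))
  have hf : IntervalIntegrable f volume ε 1 :=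
    ContinuousOn.intervalIntegrable_of_Icc hε₁ (by fun_prop)
  have hφ : IntervalIntegrable φ volume ε 1 :=
    ContinuousOn.intervalIntegrable_of_Icc hε₁ (by fun_prop)
  have hφ_int : ∫ r in ε..1, φ r = -(ε ^ (k + 1) * V ε * η ε ^ 2) := by
    rw [intervalIntegral.integral_eq_sub_of_hasDerivAt
      (f := fun x => x ^ (k + 1) * V x * η x ^ 2)
      (fun r hr => hasDerivAt_pow_mul_mul_sq (hVd r (uIcc_of_le hε₁ ▸ hr)) (hηd r)) hφ,
      hη₁]
    ring
  have hsum : 0 ≤ ∫ r in ε..1, (f r + α / 2 * φ r) :=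
    intervalIntegral.integral_nonneg hε₁ fun r hr =>
      hardy_integrand_add_mul_deriv_nonneg k (hε₀.trans hr.1) (hV r hr) (hcond r hr)
  rw [intervalIntegral.integral_add hf (hφ.const_mul _), intervalIntegral.integral_const_mul,
    hφ_int] at hsum
  linarith

end

theorem stmt_5 (n : ℕ) (hn : 3 ≤ n) (alpha beta : ℝ)
    (V V' : ℝ → ℝ)
    (hVpos : ∀ r ∈ Ioc (0:ℝ) 1, 0 ≤ V r)
    (hVdiff : ∀ r ∈ Ioc (0:ℝ) 1, HasDerivAt V (V' r) r)
    (hV'cont : ContinuousOn V' (Ioc (0:ℝ) 1))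
    (hineq : ∀ r ∈ Ioc (0:ℝ) 1,
      0 ≤ alpha * (r * V' r + ((n : ℝ) - 2 * beta - alpha - 2) * V r))
    (hlim : Tendsto (fun r : ℝ => r ^ (n - 2) * V r) (nhdsWithin 0 (Ioi 0)) (nhds 0))
    (eta : ℝ → ℝ) (heta : ContDiff ℝ 1 eta)
    (hsupp : ∃ a : ℝ, a < 1 ∧ ∀ r, a ≤ r → eta r = 0) :
    0 ≤ ∫ r in Ioo (0:ℝ) 1,
      r ^ (n - 3) * V r *
        ((r * deriv eta r + beta * eta r) ^ 2 - alpha ^ 2 / 4 * (eta r) ^ 2) := by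
  obtain ⟨k, rfl⟩ : ∃ k, n = k + 3 := ⟨n - 3, by omega⟩
  obtain ⟨a, ha₁, ha₀⟩ := hsupp
  rw [show k + 3 - 2 = k + 1 by omega] at hlim
  rw [show k + 3 - 3 = k by omega]
  have hboundary : Tendsto (fun ε => alpha / 2 * (ε ^ (k + 1) * V ε * eta ε ^ 2)) (𝓝[>] 0)
      (𝓝 0) := by
    simpa using
      (hlim.mul (((heta.continuous.tendsto 0).mono_left nhdsWithin_le_nhds).pow 2)).const_mul
        (alpha / 2)
  refine integral_Ioo_nonneg_of_tendsto_of_le_integral zero_lt_one hboundary fun ε hε => ?_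
  have hsub : Icc ε 1 ⊆ Ioc 0 1 := fun r hr => ⟨hε.1.trans_le hr.1, hr.2⟩
  refine hardy_boundary_term_le_integral hε.1.le hε.2.le (fun r hr => hVpos r (hsub hr))
    (fun r hr => hVdiff r (hsub hr)) (hV'cont.mono hsub) (fun r hr => ?_) heta (ha₀ 1 ha₁.le)
  convert hineq r (hsub hr) using 4
  push_cast
  ring
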